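/- Let M1 and M2 be equivalent total deterministic top-down tree transducers with state sets Q1, Q2 over input alphabet Σ. Then their height-balance is bounded by c = max{ height(rhs(Mi, q, a)) : i ∈ {1,2}, q ∈ Qi, a ∈ Σ^(0) }, the maximal height of a right-hand side of a rule for an input symbol of rank 0: for every input tree s and node u of s, |height(M1(s[u←x])) − height(M2(s[u←x]))| ≤ c. -/

import Mathlib

/-! ## Finite ordered ranked trees -/

/-- Finite ordered labeled trees. -/
inductive RTree (α : Type) : Type
  | node : α → List (RTree α) → RTree α

namespace RTree

variable {α β : Type}

/-- The label of the root node. -/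
def label : RTree α → α
  | node a _ => a

mutual
  /-- The size (number of nodes) of a tree. -/
  def size : RTree α → ℕ
    | node _ ts => 1 + sizeList ts
  def sizeList : List (RTree α) → ℕ
    | [] => 0
    | t :: ts => size t + sizeList ts
end

mutual
  /-- The height of a tree (a leaf has height 1). -/
  def height : RTree α → ℕ
    | node _ ts => 1 + heightList ts
  def heightList : List (RTree α) → ℕ
    | [] => 0
    | t :: ts => max (height t) (heightList ts)
end

mutual
  /-- Relabeling of a tree. -/
  def map (f : α → β) : RTree α → RTree β
    | node a ts => node (f a) (mapList f ts)
  def mapList (f : α → β) : List (RTree α) → List (RTree β)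
    | [] => []
    | t :: ts => map f t :: mapList f ts
end

/-- `WF rk t` means `t` is a tree over the ranked alphabet with rank function `rk`:
every node labeled `a` has exactly `rk a` children.  Thus `T_Σ = {t | WF rk t}`. -/
inductive WF (rk : α → ℕ) : RTree α → Prop
  | node {a : α} {ts : List (RTree α)} :
      ts.length = rk a → (∀ t ∈ ts, WF rk t) → WF rk (node a ts)

/-- `SubtreeAt t u r`: `u` is (the Dewey path of) a node of `t` and `r` is the
subtree of `t` rooted at `u`. -/
inductive SubtreeAt : RTree α → List ℕ → RTree α → Prop
  | here (t : RTree α) : SubtreeAt t [] t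
  | child {a : α} {ts : List (RTree α)} {i : ℕ} {u : List ℕ} {ti r : RTree α} :
      ts[i]? = some ti → SubtreeAt ti u r → SubtreeAt (node a ts) (i :: u) r

/-- `ReplaceAt t u r t'`: `u` is a node of `t`, and `t'` is the tree `t[u ← r]`
obtained from `t` by replacing the subtree rooted at `u` by `r`. -/
inductive ReplaceAt : RTree α → List ℕ → RTree α → RTree α → Prop
  | here (t r : RTree α) : ReplaceAt t [] r r
  | child {a : α} {ts : List (RTree α)} {i : ℕ} {u : List ℕ} {r ti ti' : RTree α} :
      ts[i]? = some ti → ReplaceAt ti u r ti' →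
      ReplaceAt (node a ts) (i :: u) r (node a (ts.set i ti'))

end RTree

/-- A (complete) deterministic finite-state bottom-up tree automaton over the
alphabet `S`, with state set `P` and final states `final`. -/
structure BUA (S P : Type) where
  delta : S → List P → P
  final : Set P

variable {S P : Type}

mutual
  /-- The state reached by a bottom-up automaton on a tree. -/
  def buaRun (A : BUA S P) : RTree S → P
    | .node a ts => A.delta a (buaRunList A ts)
  def buaRunList (A : BUA S P) : List (RTree S) → List P
    | [] => []
    | t :: ts => buaRun A t :: buaRunList A ts
end

/-- A tree language over the ranked alphabet `(S, rk)` is regular if it is recognized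
by a deterministic finite-state bottom-up tree automaton. -/
def RegularTreeLang (rk : S → ℕ) (L : Set (RTree S)) : Prop :=
  ∃ (P : Type) (_ : Fintype P) (A : BUA S P),
    L = {t | RTree.WF rk t ∧ buaRun A t ∈ A.final}
/-! ## Deterministic macro tree transducers

A state of rank `m+1` is encoded by `prm q = m` (its number of context parameters).
Right-hand sides of rules are trees over `Δ ∪ Q ∪ X ∪ Y`, where every `Q`-labeled
node has an input variable `x_i` as its (implicit) first child; this is encoded by
the constructor `MRhs.call q i ps`.  A top-down tree transducer is exactly a macro
tree transducer all of whose states have rank one (`prm q = 0`).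

To be able to talk about partial inputs `s[u ← x]`, input trees are trees over
`Option S`, where `none` plays the role of the fresh rank-0 symbol `x`; an
ordinary input tree `s` is represented as `RTree.map some s`.  Outputs (sentential
forms) are trees over the alphabet `PL Q D`: output symbols `PL.out d`, unresolved
state calls `PL.st q` (i.e. `q(x, t₁, …, t_m)`, whose children are the current
parameter trees), and formal context parameters `PL.pr j` (i.e. `y_{j+1}`). -/

/-- Labels of sentential forms produced by a macro tree transducer. -/
inductive PL (Q D : Type) : Type
  | out : D → PL Q D
  | st : Q → PL Q D
  | pr : ℕ → PL Q D

/-- Right-hand sides of rules of a macro tree transducer with states `Q` and output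
alphabet `D`: `out d ts` is an output symbol with subtrees, `param j` is the context
parameter `y_{j+1}`, and `call q i ps` is a state call `q(x_{i+1}, ps)`. -/
inductive MRhs (Q D : Type) : Type
  | out : D → List (MRhs Q D) → MRhs Q D
  | param : ℕ → MRhs Q D
  | call : Q → ℕ → List (MRhs Q D) → MRhs Q D

/-- Well-formedness of a right-hand side for a rule of a state with `m` parameters
and an input symbol of rank `k`: output symbols have the right number of children,
parameters are among `y_1, …, y_m`, input variables are among `x_1, …, x_k`, and a
call of state `q'` passes exactly `prm q'` parameter trees. -/
inductive RhsWF {Q D : Type} (rkD : D → ℕ) (prm : Q → ℕ) (k m : ℕ) : MRhs Q D → Prop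
  | out {d ts} : ts.length = rkD d → (∀ t ∈ ts, RhsWF rkD prm k m t) →
      RhsWF rkD prm k m (.out d ts)
  | param {j} : j < m → RhsWF rkD prm k m (.param j)
  | call {q i ps} : i < k → ps.length = prm q → (∀ t ∈ ps, RhsWF rkD prm k m t) →
      RhsWF rkD prm k m (.call q i ps)

/-- A deterministic macro tree transducer with states `Q`, input alphabet `(S, rkS)`
and output alphabet `(D, rkD)`.  `prm q` is the number of context parameters of
state `q` (so `q` has rank `prm q + 1`); `rules q σ` is the right-hand side of the
`(q,σ)`-rule, if present (determinism: at most one rule per pair). -/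
structure MTT (Q S D : Type) where
  rkS : S → ℕ
  rkD : D → ℕ
  prm : Q → ℕ
  init : Q
  rules : Q → S → Option (MRhs Q D)

namespace MTT

variable {Q S D : Type}

/-- `M` is a well-formed macro tree transducer: the initial state has rank one and
all right-hand sides are well-formed. -/
def Proper (M : MTT Q S D) : Prop :=
  M.prm M.init = 0 ∧
    ∀ q σ r, M.rules q σ = some r → RhsWF M.rkD M.prm (M.rkS σ) (M.prm q) r

/-- `M` is total: there is exactly one rule for every state and input symbol. -/
def Total (M : MTT Q S D) : Prop := ∀ q σ, (M.rules q σ).isSome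

end MTT

/-- A top-down tree transducer is a macro tree transducer each of whose states has
rank one, i.e. no context parameters. -/
def IsTopDown {Q S D : Type} (M : MTT Q S D) : Prop := ∀ q, M.prm q = 0

/-- A macro tree transducer is monadic if its input and output ranked alphabets
only contain symbols of rank 1 and rank 0. -/
def MTT.Monadic {Q S D : Type} (M : MTT Q S D) : Prop :=
  (∀ σ, M.rkS σ ≤ 1) ∧ (∀ d, M.rkD d ≤ 1)

variable {Q S D : Type}

mutual
  /-- Second-order substitution of the parameter leaves `y_{j+1}` of a sentential
  form by the trees `vs`. -/
  def psubst (vs : List (RTree (PL Q D))) : RTree (PL Q D) → RTree (PL Q D)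
    | .node (.pr j) _ => vs.getD j (.node (.pr j) [])
    | .node (.out d) ts => .node (.out d) (psubstList vs ts)
    | .node (.st q) ts => .node (.st q) (psubstList vs ts)
  def psubstList (vs : List (RTree (PL Q D))) :
      List (RTree (PL Q D)) → List (RTree (PL Q D))
    | [] => []
    | t :: ts => psubst vs t :: psubstList vs ts
end

/-- The fresh rank-0 input symbol `x` used in partial inputs `s[u ← x]`. -/
def xLeaf {S : Type} : RTree (Option S) := .node none []

mutual
  /-- Big-step semantics of a macro tree transducer: `MEval M q s t` means that the
  computation of `M` started in state `q` on the input tree `s` (a tree over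
  `Option S`, where `none` is the fresh symbol `x` of partial inputs) produces the
  (sentential form) tree `t`.  On the symbol `x` the computation blocks, yielding
  the unresolved call `q(x, y_1, …, y_m)`.  For `s ∈ T_Σ` (no occurrence of `x`)
  and well-formed transducers, `t` contains no `PL.st` labels, and `M_q(s)` is
  defined iff such a `t` exists; determinism makes `t` unique. -/
  inductive MEval (M : MTT Q S D) : Q → RTree (Option S) → RTree (PL Q D) → Prop
    | atX (q : Q) :
        MEval M q (.node none [])
          (.node (.st q) ((List.range (M.prm q)).map fun j => .node (.pr j) []))
    | step {q : Q} {σ : S} {ss : List (RTree (Option S))} {r : MRhs Q D}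
        {t : RTree (PL Q D)} :
        M.rules q σ = some r → MExpand M ss r t → MEval M q (.node (some σ) ss) t

  /-- Evaluation of a right-hand side with current input subtrees `ss`. -/
  inductive MExpand (M : MTT Q S D) :
      List (RTree (Option S)) → MRhs Q D → RTree (PL Q D) → Prop
    | out {ss d ts us} : MExpandList M ss ts us →
        MExpand M ss (.out d ts) (.node (.out d) us)
    | param {ss j} : MExpand M ss (.param j) (.node (.pr j) [])
    | call {ss : List (RTree (Option S))} {q : Q} {i : ℕ} {ps : List (MRhs Q D)}
        {si : RTree (Option S)} {vs : List (RTree (PL Q D))} {u : RTree (PL Q D)} :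
        ss[i]? = some si → MExpandList M ss ps vs → MEval M q si u →
        MExpand M ss (.call q i ps) (psubst vs u)

  inductive MExpandList (M : MTT Q S D) :
      List (RTree (Option S)) → List (MRhs Q D) → List (RTree (PL Q D)) → Prop
    | nil {ss} : MExpandList M ss [] []
    | cons {ss t ts u us} : MExpand M ss t u → MExpandList M ss ts us →
        MExpandList M ss (t :: ts) (u :: us)
end

/-- The translation `τ_M ⊆ T_Σ × T_Δ` realized by a macro tree transducer `M`
(the graph of the partial function `τ_M : T_Σ ⇀ T_Δ`). -/
def MTT.tau (M : MTT Q S D) : Set (RTree S × RTree D) :=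
  {p | RTree.WF M.rkS p.1 ∧ MEval M M.init (RTree.map some p.1) (RTree.map PL.out p.2)}

mutual
  /-- The height of a right-hand side, viewed as a tree over `Δ ∪ Q ∪ X ∪ Y`
  (a state call `q(x_i, ps)` has the leaf `x_i` as an additional child). -/
  def rhsHeight {Q D : Type} : MRhs Q D → ℕ
    | .out _ ts => 1 + rhsHeightList ts
    | .param _ => 1
    | .call _ _ ps => 1 + max 1 (rhsHeightList ps)
  def rhsHeightList {Q D : Type} : List (MRhs Q D) → ℕ
    | [] => 0
    | t :: ts => max (rhsHeight t) (rhsHeightList ts)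
end

/-! Fill the hole `x` of `s[u ← x]` with some input symbol `a` of rank 0. A top-down
transducer leaves every state call `q(x)` in its output as a leaf, and on the filled input this
leaf becomes the output of the `(q, a)`-rule, whose height lies between `1` and `c`. So each
output height grows by at most `c`, while on the filled input, a genuine input tree, the two
transducers produce the same output. -/

namespace RTree

variable {α β : Type}

theorem one_le_height (t : RTree α) : 1 ≤ t.height := by
  cases t
  rw [height]
  omega

mutual
theorem height_map (f : α → β) : ∀ t : RTree α, (t.map f).height = t.height
  | node a ts => by rw [map, height, height, heightList_mapList]
theorem heightList_mapList (f : α → β) :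
    ∀ ts : List (RTree α), heightList (mapList f ts) = heightList ts
  | [] => rfl
  | t :: ts => by rw [mapList, heightList, heightList, height_map, heightList_mapList]
end

theorem mapList_eq_map (f : α → β) : ∀ ts : List (RTree α), mapList f ts = ts.map (map f)
  | [] => rfl
  | t :: ts => by rw [mapList, mapList_eq_map f ts, List.map_cons]

theorem getElem?_mapList (f : α → β) (ts : List (RTree α)) (i : ℕ) :
    (mapList f ts)[i]? = ts[i]?.map (map f) := by
  rw [mapList_eq_map, List.getElem?_map]

theorem WF.map {rk : β → ℕ} {f : α → β} {t : RTree α} (h : WF (rk ∘ f) t) :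
    WF rk (t.map f) := by
  induction h with
  | @node a ts hlen _ ih =>
    rw [RTree.map, mapList_eq_map]
    refine WF.node (by rw [List.length_map, hlen]; rfl) fun t' ht' => ?_
    obtain ⟨t, ht, rfl⟩ := List.mem_map.mp ht'
    exact ih t ht

theorem WF.exists_rank_eq_zero {rk : α → ℕ} {t : RTree α} (h : WF rk t) :
    ∃ a, rk a = 0 := by
  induction h with
  | @node a ts hlen _ ih =>
    cases ts with
    | nil => exact ⟨a, hlen.symm⟩
    | cons t _ => exact ih t List.mem_cons_self

theorem ReplaceAt.wf {rk : α → ℕ} {t r t' : RTree α} {u : List ℕ}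
    (hrep : ReplaceAt t u r t') (ht : WF rk t) (hr : WF rk r) : WF rk t' := by
  induction hrep with
  | here => exact hr
  | child hget _ ih =>
    cases ht with
    | node hlen hmem =>
      refine WF.node (by rw [List.length_set, hlen]) fun t'' ht'' => ?_
      rcases List.mem_or_eq_of_mem_set ht'' with h | rfl
      · exact hmem t'' h
      · exact ih (hmem _ (List.mem_of_getElem? hget)) hr

end RTree

section Evaluation

variable {M : MTT Q S D}

mutual
theorem MEval.unique : ∀ {q s t t'}, MEval M q s t → MEval M q s t' → t = t'
  | _, _, _, _, .atX _, .atX _ => rfl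
  | _, _, _, _, .step hr he, .step hr' he' => by
    cases hr.symm.trans hr'
    exact he.unique he'
theorem MExpand.unique : ∀ {ss r t t'}, MExpand M ss r t → MExpand M ss r t' → t = t'
  | _, _, _, _, .out hl, .out hl' => by rw [hl.unique hl']
  | _, _, _, _, .param, .param => rfl
  | _, _, _, _, .call hi hl he, .call hi' hl' he' => by
    cases hi.symm.trans hi'
    rw [hl.unique hl', he.unique he']
theorem MExpandList.unique :
    ∀ {ss rs us us'}, MExpandList M ss rs us → MExpandList M ss rs us' → us = us'
  | _, _, _, _, .nil, .nil => rfl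
  | _, _, _, _, .cons he hl, .cons he' hl' => by rw [he.unique he', hl.unique hl']
end

theorem MTT.Proper.rhsWF_of_isTopDown (hp : M.Proper) (htd : IsTopDown M) {q : Q} {σ : S}
    {r : MRhs Q D} (hr : M.rules q σ = some r) : RhsWF M.rkD M.prm (M.rkS σ) 0 r := by
  simpa only [htd q] using hp.2 q σ r hr

-- Top-down outputs contain no parameter nodes, so the empty parameter substitution
-- performed at every state call is the identity on them.
mutual
theorem MEval.psubst_nil (hp : M.Proper) (htd : IsTopDown M) :
    ∀ {q s ξ}, MEval M q s ξ → psubst [] ξ = ξ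
  | _, _, _, .atX q => by simp [htd q, psubst, psubstList]
  | _, _, _, .step hr he => he.psubst_nil hp htd (hp.rhsWF_of_isTopDown htd hr)
theorem MExpand.psubst_nil (hp : M.Proper) (htd : IsTopDown M) :
    ∀ {k ss r t}, RhsWF M.rkD M.prm k 0 r → MExpand M ss r t → psubst [] t = t
  | _, _, _, _, .out _ hwf, .out hl => by rw [psubst, hl.psubst_nil hp htd hwf]
  | _, _, _, _, .param hj, _ => absurd hj (Nat.not_lt_zero _)
  | _, _, _, _, .call _ hlen _, .call _ hl he => by
    rw [htd, List.length_eq_zero_iff] at hlen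
    subst hlen
    cases hl
    rw [he.psubst_nil hp htd, he.psubst_nil hp htd]
theorem MExpandList.psubst_nil (hp : M.Proper) (htd : IsTopDown M) :
    ∀ {k ss rs us}, (∀ r ∈ rs, RhsWF M.rkD M.prm k 0 r) → MExpandList M ss rs us →
      psubstList [] us = us
  | _, _, _, _, _, .nil => rfl
  | _, _, _, _, hwf, .cons he hl => by
    rw [psubstList, he.psubst_nil hp htd (hwf _ List.mem_cons_self),
      hl.psubst_nil hp htd fun r hr => hwf r (List.mem_cons_of_mem _ hr)]
end

mutual
theorem MExpand.exists_of_rhsWF_zero (ss : List (RTree (Option S))) :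
    ∀ {r : MRhs Q D}, RhsWF M.rkD M.prm 0 0 r →
      ∃ d, MExpand M ss r (RTree.map PL.out d) ∧ d.height = rhsHeight r
  | .out d _, .out _ hwf => by
    obtain ⟨ds, hl, hh⟩ := MExpandList.exists_of_rhsWF_zero ss hwf
    exact ⟨.node d ds, .out hl, by rw [RTree.height, rhsHeight, hh]⟩
  | .param _, .param hj => absurd hj (Nat.not_lt_zero _)
  | .call .., .call hi _ _ => absurd hi (Nat.not_lt_zero _)
theorem MExpandList.exists_of_rhsWF_zero (ss : List (RTree (Option S))) :
    ∀ {rs : List (MRhs Q D)}, (∀ r ∈ rs, RhsWF M.rkD M.prm 0 0 r) →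
      ∃ ds, MExpandList M ss rs (RTree.mapList PL.out ds) ∧
        RTree.heightList ds = rhsHeightList rs
  | [], _ => ⟨[], .nil, rfl⟩
  | _ :: _, hwf => by
    obtain ⟨d, he, hd⟩ := MExpand.exists_of_rhsWF_zero ss (hwf _ List.mem_cons_self)
    obtain ⟨ds, hl, hds⟩ :=
      MExpandList.exists_of_rhsWF_zero ss fun r hr => hwf r (List.mem_cons_of_mem _ hr)
    exact ⟨d :: ds, .cons he hl, by rw [RTree.heightList, rhsHeightList, hd, hds]⟩
end

mutual
theorem MEval.exists_fill (hp : M.Proper) (htd : IsTopDown M) {a : S} (ha : M.rkS a = 0)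
    (htot : ∀ q, (M.rules q a).isSome) {c : ℕ}
    (hmax : ∀ q r, M.rules q a = some r → rhsHeight r ≤ c) :
    ∀ {q s ξ}, MEval M q s ξ → ∃ d : RTree D,
      MEval M q ((s.map (·.getD a)).map some) (d.map PL.out) ∧
        ξ.height ≤ d.height ∧ d.height ≤ ξ.height + c
  | _, _, _, .atX q => by
    obtain ⟨r, hr⟩ := Option.isSome_iff_exists.mp (htot q)
    obtain ⟨d, he, hd⟩ := MExpand.exists_of_rhsWF_zero []
      (ha ▸ hp.rhsWF_of_isTopDown htd hr)
    refine ⟨d, .step hr he, ?_⟩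
    simp only [htd q, List.range_zero, List.map_nil, RTree.height, RTree.heightList]
    have hpos := RTree.one_le_height d
    have hle := hmax q r hr
    omega
  | _, _, _, .step hr he => by
    obtain ⟨d, he', hd⟩ :=
      he.exists_fill hp htd ha htot hmax (hp.rhsWF_of_isTopDown htd hr)
    exact ⟨d, .step hr he', hd⟩
theorem MExpand.exists_fill (hp : M.Proper) (htd : IsTopDown M) {a : S} (ha : M.rkS a = 0)
    (htot : ∀ q, (M.rules q a).isSome) {c : ℕ}
    (hmax : ∀ q r, M.rules q a = some r → rhsHeight r ≤ c) :
    ∀ {k ss r t}, RhsWF M.rkD M.prm k 0 r → MExpand M ss r t → ∃ d : RTree D,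
      MExpand M (RTree.mapList some (RTree.mapList (·.getD a) ss)) r (d.map PL.out) ∧
        t.height ≤ d.height ∧ d.height ≤ t.height + c
  | _, _, _, _, .out _ hwf, .out hl => by
    obtain ⟨ds, hl', hds⟩ := hl.exists_fill hp htd ha htot hmax hwf
    refine ⟨.node _ ds, .out hl', ?_⟩
    simp only [RTree.height]
    omega
  | _, _, _, _, .param hj, _ => absurd hj (Nat.not_lt_zero _)
  | _, _, _, _, .call _ hlen _, .call hi hl he => by
    rw [htd, List.length_eq_zero_iff] at hlen
    subst hlen
    cases hl
    obtain ⟨d, he', hd⟩ := he.exists_fill hp htd ha htot hmax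
    have hcall :
        MExpand M (RTree.mapList some (RTree.mapList (fun o : Option S => o.getD a) _)) _ _ :=
      .call (by rw [RTree.getElem?_mapList, RTree.getElem?_mapList, hi]; rfl) .nil he'
    rw [he'.psubst_nil hp htd] at hcall
    refine ⟨d, hcall, ?_⟩
    rwa [he.psubst_nil hp htd]
theorem MExpandList.exists_fill (hp : M.Proper) (htd : IsTopDown M) {a : S} (ha : M.rkS a = 0)
    (htot : ∀ q, (M.rules q a).isSome) {c : ℕ}
    (hmax : ∀ q r, M.rules q a = some r → rhsHeight r ≤ c) :
    ∀ {k ss rs us}, (∀ r ∈ rs, RhsWF M.rkD M.prm k 0 r) → MExpandList M ss rs us →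
      ∃ ds : List (RTree D),
        MExpandList M (RTree.mapList some (RTree.mapList (·.getD a) ss)) rs
          (RTree.mapList PL.out ds) ∧
          RTree.heightList us ≤ RTree.heightList ds ∧
          RTree.heightList ds ≤ RTree.heightList us + c
  | _, _, _, _, _, .nil => ⟨[], .nil, le_rfl, Nat.le_add_right _ _⟩
  | _, _, _, _, hwf, .cons he hl => by
    obtain ⟨d, he', hd⟩ := he.exists_fill hp htd ha htot hmax (hwf _ List.mem_cons_self)
    obtain ⟨ds, hl', hds⟩ :=
      hl.exists_fill hp htd ha htot hmax fun r hr => hwf r (List.mem_cons_of_mem _ hr)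
    refine ⟨d :: ds, .cons he' hl', ?_⟩
    simp only [RTree.heightList]
    omega
end

end Evaluation

theorem equivalent_total_tdtt_height_balance {Q1 Q2 S D : Type}
    [Fintype Q1] [Fintype Q2] [Fintype S] [Fintype D]
    (M1 : MTT Q1 S D) (M2 : MTT Q2 S D)
    (hp1 : MTT.Proper M1) (hp2 : MTT.Proper M2)
    (htd1 : IsTopDown M1) (htd2 : IsTopDown M2)
    (htot1 : MTT.Total M1) (htot2 : MTT.Total M2)
    (hS : M1.rkS = M2.rkS) (hD : M1.rkD = M2.rkD)
    (hequiv : MTT.tau M1 = MTT.tau M2)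
    (c : ℕ)
    (hmax1 : ∀ q σ r, M1.rkS σ = 0 → M1.rules q σ = some r → rhsHeight r ≤ c)
    (hmax2 : ∀ q σ r, M2.rkS σ = 0 → M2.rules q σ = some r → rhsHeight r ≤ c) :
    ∀ s u pt, RTree.WF M1.rkS s →
      RTree.ReplaceAt (RTree.map some s) u xLeaf pt →
      ∀ ξ1 ξ2, MEval M1 M1.init pt ξ1 → MEval M2 M2.init pt ξ2 →
        |(ξ1.height : ℤ) - (ξ2.height : ℤ)| ≤ c := by
  intro s u pt hs hpt ξ1 ξ2 h1 h2
  obtain ⟨a, ha⟩ := hs.exists_rank_eq_zero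
  have hfill : RTree.WF M1.rkS (pt.map (·.getD a)) :=
    RTree.WF.map (hpt.wf (RTree.WF.map hs) (.node ha.symm nofun))
  obtain ⟨d1, he1, hd1⟩ :=
    h1.exists_fill hp1 htd1 ha (htot1 · a) (hmax1 · a · ha)
  obtain ⟨d2, he2, hd2⟩ :=
    h2.exists_fill hp2 htd2 (hS ▸ ha) (htot2 · a) (hmax2 · a · (hS ▸ ha))
  have hd : d1.height = d2.height := by
    have h : (pt.map (·.getD a), d1) ∈ M2.tau := hequiv ▸ ⟨hfill, he1⟩
    rw [← RTree.height_map PL.out d1, ← RTree.height_map PL.out d2, h.2.unique he2]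
  rw [abs_sub_le_iff]
  omega
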